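/- arXiv:1503.08600 — 7 statements merged into one kernel-verified Lean document; each statement's English description precedes it below -/
import Mathlib

section
/- Suppose the mask array λ takes values in [0,1], that ∑_{j ∈ G} λ (append A j) = 1 for every tuple A : Fin N → G, that λ applied to the all-zero (N+1)-tuple equals 1, and that for every A of zero-tail form of depth k with 1 ≤ k ≤ N and every j ≠ 0 one has λ (append A j) = 0. Then a 0 A = 1 for every A : Fin N → G of zero-tail form (of any depth 0 ≤ k ≤ N). (This is Lemma 4.1 of the paper: the components of the array A^{(0)} corresponding to vertices of level at most N of the tree T̃ equal 1.) -/
open Finset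

noncomputable instance (p s : ℕ) [Fact p.Prime] : Fintype (GaloisField p s) :=
  Fintype.ofFinite _

/-- `appendTuple A j` is the `(N+1)`-tuple `(A 0, …, A (N-1), j)`. -/
def appendTuple {G : Type*} {N : ℕ} (A : Fin N → G) (j : G) : Fin (N + 1) → G :=
  Fin.snoc A j

/-- `shiftTuple A j` is the `N`-tuple `(A 1, …, A (N-1), j)`. -/
def shiftTuple {G : Type*} {N : ℕ} (A : Fin N → G) (j : G) : Fin N → G :=
  fun i => if h : (i : ℕ) + 1 < N then A ⟨(i : ℕ) + 1, h⟩ else j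

/-- `padShiftTuple k A` is the `N`-tuple `(A k, …, A (N-1), 0, …, 0)`. -/
def padShiftTuple {G : Type*} [Zero G] {N : ℕ} (k : ℕ) (A : Fin N → G) : Fin N → G :=
  fun i => if h : (i : ℕ) + k < N then A ⟨(i : ℕ) + k, h⟩ else 0

/-- The arrays `A⁽ⁿ⁾` of formulas (3.3)–(3.4) of the paper. -/
noncomputable def arr {G : Type*} [Zero G] [Fintype G] {N : ℕ}
    (lam : (Fin (N + 1) → G) → ℝ) : ℕ → (Fin N → G) → ℝ
  | 0, A => ∏ k ∈ Finset.range N, lam (appendTuple (padShiftTuple k A) 0)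
  | n + 1, A => ∑ j : G, lam (appendTuple A j) * arr lam n (shiftTuple A j)

/-- `A` has zero-tail form of depth `k`: `A i = 0` for all `i ≥ k` and, if `k ≥ 1`,
`A (k-1) ≠ 0`. -/
def ZeroTail {G : Type*} [Zero G] {N : ℕ} (k : ℕ) (A : Fin N → G) : Prop :=
  k ≤ N ∧ (∀ i : Fin N, k ≤ (i : ℕ) → A i = 0) ∧
    ∀ (_ : 1 ≤ k) (h : k - 1 < N), A ⟨k - 1, h⟩ ≠ 0

/-- **Lemma 4.1** of the paper: if the mask array `λ` takes values in `[0,1]`, sums to `1`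
along appended last coordinates, equals `1` on the all-zero `(N+1)`-tuple, and vanishes on
`append A j` whenever `A` is of zero-tail form of depth `1 ≤ k ≤ N` and `j ≠ 0`, then the
components of the array `A⁽⁰⁾` corresponding to zero-tail tuples (vertices of level at most
`N` of the tree `T̃`) are equal to `1`. -/
theorem lemma41 (p s N : ℕ) [Fact p.Prime] (hs : 1 ≤ s) (hN : 1 ≤ N)
    (lam : (Fin (N + 1) → GaloisField p s) → ℝ)
    (h01 : ∀ B : Fin (N + 1) → GaloisField p s, lam B ∈ Set.Icc (0 : ℝ) 1)
    (hsum : ∀ A : Fin N → GaloisField p s,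
      ∑ j : GaloisField p s, lam (appendTuple A j) = 1)
    (hzero : lam (fun _ => 0) = 1)
    (hvanish : ∀ (k : ℕ) (A : Fin N → GaloisField p s), 1 ≤ k → k ≤ N → ZeroTail k A →
      ∀ j : GaloisField p s, j ≠ 0 → lam (appendTuple A j) = 0) :
    ∀ (k : ℕ) (A : Fin N → GaloisField p s), k ≤ N → ZeroTail k A →
      arr lam 0 A = 1 := by
  -- Key: for any zero-tail tuple B, lam (appendTuple B 0) = 1.
  have key : ∀ (m : ℕ) (B : Fin N → GaloisField p s), m ≤ N → ZeroTail m B →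
      lam (appendTuple B 0) = 1 := by
    intro m B hmN hB
    rcases Nat.eq_zero_or_pos m with hm | hm
    · subst hm
      have hBzero : appendTuple B 0 = (fun _ => 0) := by
        funext i
        refine Fin.lastCases ?_ ?_ i
        · simp [appendTuple]
        · intro j
          simp [appendTuple, Fin.snoc_castSucc, hB.2.1 j (Nat.zero_le _)]
      rw [hBzero, hzero]
    · have h := hsum B
      rw [Fintype.sum_eq_single (0 : GaloisField p s)
        (fun j hj => hvanish m B hm hmN hB j hj)] at h
      exact h
  intro k A hk hA
  show (∏ i ∈ Finset.range N, lam (appendTuple (padShiftTuple i A) 0)) = 1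
  refine Finset.prod_eq_one fun i _ => ?_
  refine key (k - i) _ (by omega) ?_
  refine ⟨by omega, ?_, ?_⟩
  · intro x hx
    unfold padShiftTuple
    split
    · exact hA.2.1 _ (by simp only [Fin.val_mk]; omega)
    · rfl
  · intro h1 hlt
    have hik : i + 1 ≤ k := by omega
    unfold padShiftTuple
    simp only [Fin.val_mk]
    split
    · have : (⟨k - i - 1 + i, by omega⟩ : Fin N) = ⟨k - 1, by omega⟩ := by
        simp only [Fin.mk.injEq]; omega
      rw [this]
      exact hA.2.2 (by omega) (by omega)
    · omega
end

section
/- Let 1 ≤ k ≤ N and let A : Fin N → G have zero-tail form of depth k. Suppose j : G and 0 ≤ m ≤ k-1 are such that (shift A j) i = 0 for all i ≥ m. Then j = 0 and m = k-1. (This is the key step in the proof of Lemma 4.1: in the digraph Γ, the vertex A_k = (a_k,…,a_1,0,…,0) with a_1 ≠ 0 is connected only to the single vertex A_{k-1} = (a_{k-1},…,a_1,0,…,0), and to no vertex of level strictly less than k-1.) -/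
open Finset

/-- Key step in the proof of **Lemma 4.1**: if `A` has zero-tail form of depth `k`
(`1 ≤ k ≤ N`), `j : G`, `0 ≤ m ≤ k-1`, and `(shift A j) i = 0` for all `i ≥ m`, then
`j = 0` and `m = k - 1`: the vertex `A_k = (a_k,…,a_1,0,…,0)` with `a_1 ≠ 0` is connected
in the digraph `Γ` only to the single vertex `A_{k-1} = (a_{k-1},…,a_1,0,…,0)`, and to no
vertex of level strictly less than `k - 1`. -/
theorem lemma41_key_step (p s N : ℕ) [Fact p.Prime] (hs : 1 ≤ s) (hN : 1 ≤ N)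
    (k : ℕ) (hk1 : 1 ≤ k) (hkN : k ≤ N)
    (A : Fin N → GaloisField p s) (hA : ZeroTail k A)
    (j : GaloisField p s) (m : ℕ) (hm : m ≤ k - 1)
    (hz : ∀ i : Fin N, m ≤ (i : ℕ) → shiftTuple A j i = 0) :
    j = 0 ∧ m = k - 1 := by
  obtain ⟨hkN', hA0, hAk⟩ := hA
  have hj : j = 0 := by
    have h1 : m ≤ N - 1 := hm.trans (by omega)
    have := hz ⟨N - 1, by omega⟩ h1
    simpa [shiftTuple, Nat.sub_add_cancel hN, lt_irrefl] using this
  refine ⟨hj, ?_⟩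
  by_contra hne
  have hmk : m < k - 1 := lt_of_le_of_ne hm hne
  have hk2 : k - 2 < N := by omega
  have := hz ⟨k - 2, hk2⟩ (by simp; omega)
  rw [shiftTuple] at this
  have hlt : k - 2 + 1 < N := by omega
  rw [dif_pos hlt] at this
  refine hAk hk1 (by omega) ?_
  have heq : (⟨(⟨k - 2, hk2⟩ : Fin N) + 1, hlt⟩ : Fin N) = ⟨k - 1, by omega⟩ := by
    ext; simp; omega
  rw [← heq]; exact this
end

section
/- Let ℓ : (Fin N → G) → ℕ be a level function and suppose: (i) λ takes values in [0,1]; (ii) for every A : Fin N → G, ∑_{j ∈ G} λ (append A j) = 1; (iii) for every A and every j with λ (append A j) ≠ 0, one has ℓ (shift A j) < ℓ A if ℓ A ≥ 1, and ℓ (shift A j) = 0 if ℓ A = 0. Let L₀ : ℕ and assume a 0 A = 1 for every A with ℓ A ≤ L₀. Then for every n : ℕ and every A : Fin N → G with ℓ A ≤ L₀ + n, one has a n A = 1. (This is Lemma 4.2 of the paper in abstract form: the array A^{(n)} has all components corresponding to vertices of level at most L₀ + n equal to 1; in the paper L₀ = N.) -/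
open Finset

/-- **Lemma 4.2** of the paper (abstract form): if the mask `λ` takes values in `[0,1]`,
sums to `1` along appended last coordinates, and strictly decreases the level `ℓ` along
nonvanishing transitions (sending level-`0` vertices to level-`0` vertices), and if all
components of `A⁽⁰⁾` at level `≤ L₀` equal `1`, then all components of `A⁽ⁿ⁾` at level
`≤ L₀ + n` equal `1`. -/
theorem lemma42 (p s N : ℕ) [Fact p.Prime] (hs : 1 ≤ s) (hN : 1 ≤ N)
    (lam : (Fin (N + 1) → GaloisField p s) → ℝ)
    (lev : (Fin N → GaloisField p s) → ℕ)
    (h01 : ∀ B : Fin (N + 1) → GaloisField p s, lam B ∈ Set.Icc (0 : ℝ) 1)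
    (hsum : ∀ A : Fin N → GaloisField p s,
      ∑ j : GaloisField p s, lam (appendTuple A j) = 1)
    (hlev : ∀ (A : Fin N → GaloisField p s) (j : GaloisField p s),
      lam (appendTuple A j) ≠ 0 →
        (1 ≤ lev A → lev (shiftTuple A j) < lev A) ∧
        (lev A = 0 → lev (shiftTuple A j) = 0))
    (L₀ : ℕ)
    (hbase : ∀ A : Fin N → GaloisField p s, lev A ≤ L₀ → arr lam 0 A = 1) :
    ∀ (n : ℕ) (A : Fin N → GaloisField p s), lev A ≤ L₀ + n → arr lam n A = 1 := by
  intro n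
  induction n with
  | zero => intro A hA; exact hbase A hA
  | succ n ih =>
    intro A hA
    show ∑ j : GaloisField p s, lam (appendTuple A j) * arr lam n (shiftTuple A j) = 1
    rw [← hsum A]
    apply Finset.sum_congr rfl
    intro j _
    by_cases h : lam (appendTuple A j) = 0
    · simp [h]
    · have := hlev A j h
      have hle : lev (shiftTuple A j) ≤ L₀ + n := by
        rcases Nat.eq_zero_or_pos (lev A) with h0 | h1
        · rw [this.2 h0]; exact Nat.zero_le _
        · have := this.1 h1
          omega
      rw [ih (shiftTuple A j) hle, mul_one]
end

section
/- Let ℓ : (Fin N → G) → ℕ be a level function and suppose: (i) λ takes values in [0,1]; (ii) for every A : Fin N → G, ∑_{j ∈ G} λ (append A j) = 1; (iii) for every A and every j with λ (append A j) ≠ 0, one has ℓ (shift A j) < ℓ A if ℓ A ≥ 1, and ℓ (shift A j) = 0 if ℓ A = 0. Let L₀ ≤ H̃ be natural numbers, assume ℓ A ≤ H̃ for every A : Fin N → G, and assume a 0 A = 1 for every A with ℓ A ≤ L₀. Then for every n ≥ H̃ - L₀ and every A : Fin N → G, a n A = 1. (This is the combinatorial content of Theorem 4.3: the array A^{(M)}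 consists entirely of ones for some M ≤ H̃ - N, where H̃ is the height of the tree T̃, so the associated step function φ ∈ 𝔇_M(F^{(s)}_{-N}) is an orthogonal scaling function.) -/
open Finset

/-- Combinatorial content of **Theorem 4.3**: if every tuple has level at most `H̃`
(the height of the tree `T̃`) and all components of `A⁽⁰⁾` at level `≤ L₀` equal `1`,
then the array `A⁽ⁿ⁾` consists entirely of ones for every `n ≥ H̃ - L₀`; hence the
associated step function `φ ∈ 𝔇_M(F⁽ˢ⁾₋N)` is an orthogonal scaling function. -/
theorem theorem43 (p s N : ℕ) [Fact p.Prime] (hs : 1 ≤ s) (hN : 1 ≤ N)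
    (lam : (Fin (N + 1) → GaloisField p s) → ℝ)
    (lev : (Fin N → GaloisField p s) → ℕ)
    (h01 : ∀ B : Fin (N + 1) → GaloisField p s, lam B ∈ Set.Icc (0 : ℝ) 1)
    (hsum : ∀ A : Fin N → GaloisField p s,
      ∑ j : GaloisField p s, lam (appendTuple A j) = 1)
    (hlev : ∀ (A : Fin N → GaloisField p s) (j : GaloisField p s),
      lam (appendTuple A j) ≠ 0 →
        (1 ≤ lev A → lev (shiftTuple A j) < lev A) ∧
        (lev A = 0 → lev (shiftTuple A j) = 0))
    (L₀ H : ℕ) (hLH : L₀ ≤ H)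
    (hbound : ∀ A : Fin N → GaloisField p s, lev A ≤ H)
    (hbase : ∀ A : Fin N → GaloisField p s, lev A ≤ L₀ → arr lam 0 A = 1) :
    ∀ n : ℕ, H - L₀ ≤ n → ∀ A : Fin N → GaloisField p s, arr lam n A = 1 := by
  have key : ∀ n : ℕ, ∀ A : Fin N → GaloisField p s, lev A ≤ L₀ + n → arr lam n A = 1 := by
    intro n
    induction n with
    | zero => intro A hA; exact hbase A (by omega)
    | succ n ih =>
      intro A hA
      have : arr lam (n + 1) A = ∑ j : GaloisField p s, lam (appendTuple A j) := by
        rw [show arr lam (n+1) A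
            = ∑ j : GaloisField p s, lam (appendTuple A j) * arr lam n (shiftTuple A j)
            from rfl]
        refine Finset.sum_congr rfl fun j _ => ?_
        by_cases hz : lam (appendTuple A j) = 0
        · simp [hz]
        · have h := hlev A j hz
          have : lev (shiftTuple A j) ≤ L₀ + n := by
            rcases Nat.eq_zero_or_pos (lev A) with h0 | h1
            · rw [h.2 h0]; omega
            · have := h.1 h1; omega
          rw [ih _ this, mul_one]
      rw [this, hsum]
  intro n hn A
  exact key n A (by have := hbound A; omega)
end

section
/- In an N-valid tree over G, every vertex x with ℓ x = N satisfies lab x ≠ 0. (This is the claim, used in the proof of Lemma 4.1, that vertices of level N of an N-valid tree are nonzero: otherwise the zero path of length N-1 would appear twice, once starting at x and once starting at its parent, contradicting the uniqueness of paths.) -/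
open Finset

/-- An `N`-valid tree over `G` (Definition 4.1 of the paper): a finite rooted tree with
vertices labelled by elements of `G` such that the labels vanish on the `N` levels closest
to the root (i.e. on vertices of level `≤ N - 1`), and every path of length `N - 1`
(read through the tuple of labels along `N` consecutive vertices towards the root,
starting at a vertex of level `≥ N - 1`) appears in the tree exactly once.
The level of a vertex `x` is the least `n` with `par^[n] x = r`. -/
structure NValidTree (G : Type*) [Zero G] (N : ℕ) where
  /-- The type of vertices. -/
  V : Type
  /-- The tree is finite. -/
  [finV : Fintype V]
  /-- The root. -/
  r : V
  /-- The parent map, orienting the tree from leaves to root. -/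
  par : V → V
  par_root : par r = r
  /-- Every vertex is connected to the root. -/
  reaches : ∀ x : V, ∃ n : ℕ, par^[n] x = r
  /-- The labelling of vertices by elements of `G`. -/
  lab : V → G
  /-- Vertices of level at most `N - 1` carry the zero label. -/
  lab_zero : ∀ x : V, sInf {n : ℕ | par^[n] x = r} ≤ N - 1 → lab x = 0
  /-- Every path of length `N - 1` appears in the tree exactly once: the path map
  `P x = (lab x, lab (par x), …, lab (par^[N-1] x))`, restricted to vertices of level
  `≥ N - 1`, is a bijection onto `Fin N → G`. -/
  path_bij : ∀ t : Fin N → G, ∃! x : V,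
    N - 1 ≤ sInf {n : ℕ | par^[n] x = r} ∧
      (fun i : Fin N => lab (par^[(i : ℕ)] x)) = t

/-- In an `N`-valid tree over `G = GF(p^s)`, every vertex of level `N` has a nonzero
label (used in the proof of Lemma 4.1: otherwise the zero path of length `N - 1` would
appear twice, once starting at `x` and once starting at its parent, contradicting the
uniqueness of paths). -/
theorem level_N_label_ne_zero (p s N : ℕ) [Fact p.Prime] (hs : 1 ≤ s) (hN : 1 ≤ N)
    (T : NValidTree (GaloisField p s) N) (x : T.V)
    (hx : sInf {n : ℕ | T.par^[n] x = T.r} = N) :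
    T.lab x ≠ 0 := by
  intro h0
  have hne : ∀ y : T.V, {n : ℕ | T.par^[n] y = T.r}.Nonempty := fun y => T.reaches y
  have hmem : ∀ y : T.V, T.par^[sInf {n : ℕ | T.par^[n] y = T.r}] y = T.r :=
    fun y => Nat.sInf_mem (hne y)
  have hlev : ∀ i ≤ N, sInf {n : ℕ | T.par^[n] (T.par^[i] x) = T.r} = N - i := by
    intro i hi
    apply le_antisymm
    · apply Nat.sInf_le
      show T.par^[N - i] (T.par^[i] x) = T.r
      rw [← Function.iterate_add_apply, Nat.sub_add_cancel hi]
      have := hmem x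
      rwa [hx] at this
    · apply le_csInf (hne _)
      intro m hm
      have h1 : T.par^[m + i] x = T.r := by
        rw [Function.iterate_add_apply]; exact hm
      have h2 : N ≤ m + i := hx ▸ Nat.sInf_le h1
      omega
  have hlabz : ∀ i, 1 ≤ i → i ≤ N → T.lab (T.par^[i] x) = 0 := by
    intro i h1 h2
    apply T.lab_zero
    rw [hlev i h2]
    omega
  obtain ⟨y, -, huniq⟩ := T.path_bij 0
  have hx1 : N - 1 ≤ sInf {n : ℕ | T.par^[n] x = T.r} ∧
      (fun i : Fin N => T.lab (T.par^[(i : ℕ)] x)) = 0 := by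
    constructor
    · omega
    · funext i
      rcases Nat.eq_zero_or_pos (i : ℕ) with h | h
      · simpa [h] using h0
      · simpa using hlabz i h (le_of_lt i.2)
  have hx2 : N - 1 ≤ sInf {n : ℕ | T.par^[n] (T.par x) = T.r} ∧
      (fun i : Fin N => T.lab (T.par^[(i : ℕ)] (T.par x))) = 0 := by
    constructor
    · have := hlev 1 hN
      simp only [Function.iterate_one] at this
      omega
    · funext i
      have : T.par^[(i : ℕ)] (T.par x) = T.par^[(i : ℕ) + 1] x := by
        rw [Function.iterate_add_apply, Function.iterate_one]
      rw [this]
      simpa using hlabz ((i : ℕ) + 1) (by omega) i.2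
  have heq : x = T.par x := (huniq x hx1).trans (huniq (T.par x) hx2).symm
  have h1 := hlev 1 hN
  simp only [Function.iterate_one, ← heq, hx] at h1
  omega
end

section
/- In an N-valid tree over G, let 1 ≤ l ≤ N and let x be a vertex with ℓ x = l + N - 1. Then the path tuple P x satisfies (P x) i = 0 for all i with l ≤ i ≤ N-1, and (P x) (l-1) ≠ 0. (This is the claim, used in the proof of Lemma 4.1, that every vertex of level l ≤ N of the tree T̃ has the form (a_l, a_{l-1}, …, a_1, 0, …, 0) with a_1 ≠ 0.) -/
open Finset

/-- In an `N`-valid tree over `G = GF(p^s)`, every vertex `x` of level `l + N - 1` with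
`1 ≤ l ≤ N` has path tuple of the form `(a_l, a_{l-1}, …, a_1, 0, …, 0)` with `a_1 ≠ 0`:
`(P x) i = 0` for `l ≤ i ≤ N - 1` and `(P x) (l - 1) ≠ 0` (used in the proof of
Lemma 4.1 for the vertices of level `l ≤ N` of the tree `T̃`). -/
theorem path_tuple_zero_tail (p s N : ℕ) [Fact p.Prime] (hs : 1 ≤ s) (hN : 1 ≤ N)
    (T : NValidTree (GaloisField p s) N)
    (l : ℕ) (hl1 : 1 ≤ l) (hlN : l ≤ N)
    (x : T.V) (hx : sInf {n : ℕ | T.par^[n] x = T.r} = l + N - 1) :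
    (∀ i : Fin N, l ≤ (i : ℕ) → T.lab (T.par^[(i : ℕ)] x) = 0) ∧
      T.lab (T.par^[l - 1] x) ≠ 0 := by
  have hne : {n : ℕ | T.par^[n] x = T.r}.Nonempty := T.reaches x
  have hmem : T.par^[l + N - 1] x = T.r := by
    have := Nat.sInf_mem hne; rwa [hx] at this
  have hmin : ∀ m, T.par^[m] x = T.r → l + N - 1 ≤ m := fun m hm => by
    rw [← hx]; exact Nat.sInf_le hm
  have key : ∀ k, l ≤ k → k ≤ l + N - 1 → T.lab (T.par^[k] x) = 0 := by
    intro k hk1 hk2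
    apply T.lab_zero
    have hmm : T.par^[l + N - 1 - k] (T.par^[k] x) = T.r := by
      rw [← Function.iterate_add_apply]
      have h : l + N - 1 - k + k = l + N - 1 := by omega
      rw [h]; exact hmem
    calc sInf {n | T.par^[n] (T.par^[k] x) = T.r} ≤ l + N - 1 - k := Nat.sInf_le hmm
      _ ≤ N - 1 := by omega
  refine ⟨fun i hi => key i hi (by have := i.isLt; omega), fun h0 => ?_⟩
  obtain ⟨w, _, huniq⟩ := T.path_bij (0 : Fin N → GaloisField p s)
  have hy : N - 1 ≤ sInf {n | T.par^[n] (T.par^[l - 1] x) = T.r} ∧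
      (fun i : Fin N => T.lab (T.par^[(i : ℕ)] (T.par^[l - 1] x))) = 0 := by
    constructor
    · apply le_csInf (T.reaches _)
      intro b hb
      have hb' : T.par^[b + (l - 1)] x = T.r := by
        rw [Function.iterate_add_apply]; exact hb
      have := hmin _ hb'; omega
    · funext i
      rw [← Function.iterate_add_apply]
      rcases Nat.eq_zero_or_pos (i : ℕ) with h | h
      · have h' : (i : ℕ) + (l - 1) = l - 1 := by omega
        rw [h']; exact h0
      · exact key _ (by omega) (by have := i.isLt; omega)
  have hz : N - 1 ≤ sInf {n | T.par^[n] (T.par^[l] x) = T.r} ∧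
      (fun i : Fin N => T.lab (T.par^[(i : ℕ)] (T.par^[l] x))) = 0 := by
    constructor
    · apply le_csInf (T.reaches _)
      intro b hb
      have hb' : T.par^[b + l] x = T.r := by
        rw [Function.iterate_add_apply]; exact hb
      have := hmin _ hb'; omega
    · funext i
      rw [← Function.iterate_add_apply]
      exact key _ (by omega) (by have := i.isLt; omega)
  have heq : T.par^[l - 1] x = T.par^[l] x := by
    rw [huniq _ hy, huniq _ hz]
  have hstep : ∀ m : ℕ, T.par^[(l - 1) + m] x = T.par^[l - 1] x := by
    intro m
    induction m with
    | zero => rfl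
    | succ m ih =>
      have : (l - 1) + (m + 1) = ((l - 1) + m) + 1 := by omega
      have h2 : T.par^[l] x = T.par (T.par^[l] x) := by
        conv_lhs => rw [show l = (l - 1) + 1 from by omega,
          Function.iterate_succ_apply', heq]
      rw [this, Function.iterate_succ_apply', ih, heq, ← h2]
  have hroot : T.par^[l - 1] x = T.r := by
    have := hstep N
    have h' : (l - 1) + N = l + N - 1 := by omega
    rw [h', hmem] at this
    exact this.symm
  have := hmin _ hroot
  omega
end

section
/- Let ℓ : (Fin N → G) → ℕ be a level function satisfying: ℓ A ≤ N if and only if A has zero-tail form (of some depth 0 ≤ k ≤ N). Suppose λ takes values in [0,1], ∑_{j ∈ G} λ (append A j) = 1 for every A, λ applied to the all-zero (N+1)-tuple equals 1, for every A of zero-tail form of depth k ≥ 1 and every j ≠ 0 one has λ (append A j) = 0, and for every A and every j with λ (append A j) ≠ 0, one has ℓ (shift A j) < ℓ A if ℓ A ≥ 1, and ℓ (shift A j) = 0 if ℓ A = 0. Then for every n : ℕ and every A : Fin N → G with ℓ A ≤ N + n, one has a n A = 1. (This is the combination of Lemmas 4.1 and 4.2 of the paper: the array A^{(n)} has all components corresponding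 to vertices of level at most N + n of the tree T̃ equal to 1.) -/
open Finset

/-- Combination of **Lemmas 4.1 and 4.2** of the paper: if `lev A ≤ N` exactly for the
tuples of zero-tail form, the mask `λ` takes values in `[0,1]`, sums to `1` along appended
last coordinates, equals `1` on the all-zero `(N+1)`-tuple, vanishes on `append A j` for
zero-tail `A` of depth `k ≥ 1` and `j ≠ 0`, and strictly decreases the level along
nonvanishing transitions (sending level-`0` to level-`0`), then the array `A⁽ⁿ⁾` has all
components corresponding to tuples of level at most `N + n` equal to `1`. -/
theorem lemma41_and_lemma42 (p s N : ℕ) [Fact p.Prime] (hs : 1 ≤ s) (hN : 1 ≤ N)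
    (lam : (Fin (N + 1) → GaloisField p s) → ℝ)
    (lev : (Fin N → GaloisField p s) → ℕ)
    (hlevN : ∀ A : Fin N → GaloisField p s,
      lev A ≤ N ↔ ∃ k : ℕ, k ≤ N ∧ ZeroTail k A)
    (h01 : ∀ B : Fin (N + 1) → GaloisField p s, lam B ∈ Set.Icc (0 : ℝ) 1)
    (hsum : ∀ A : Fin N → GaloisField p s,
      ∑ j : GaloisField p s, lam (appendTuple A j) = 1)
    (hzero : lam (fun _ => 0) = 1)
    (hvanish : ∀ (k : ℕ) (A : Fin N → GaloisField p s), 1 ≤ k → ZeroTail k A →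
      ∀ j : GaloisField p s, j ≠ 0 → lam (appendTuple A j) = 0)
    (hlev : ∀ (A : Fin N → GaloisField p s) (j : GaloisField p s),
      lam (appendTuple A j) ≠ 0 →
        (1 ≤ lev A → lev (shiftTuple A j) < lev A) ∧
        (lev A = 0 → lev (shiftTuple A j) = 0)) :
    ∀ (n : ℕ) (A : Fin N → GaloisField p s), lev A ≤ N + n → arr lam n A = 1 := by

  have key : ∀ (k : ℕ) (B : Fin N → GaloisField p s), ZeroTail k B →
      lam (appendTuple B 0) = 1 := by
    intro k B hB
    rcases Nat.eq_zero_or_pos k with hk | hk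
    · subst hk
      have hB0 : B = fun _ => 0 := funext fun i => hB.2.1 i (Nat.zero_le _)
      subst hB0
      have he : appendTuple (fun _ : Fin N => (0 : GaloisField p s)) 0 = fun _ => 0 := by
        funext i
        refine Fin.lastCases ?_ ?_ i <;> simp [appendTuple]
      rw [he, hzero]
    · have hs1 := hsum B
      rw [Finset.sum_eq_single (0 : GaloisField p s)] at hs1
      · exact hs1
      · intro j _ hj; exact hvanish k B hk hB j hj
      · intro h; exact absurd (Finset.mem_univ _) h
  have pad : ∀ (k k' : ℕ) (A : Fin N → GaloisField p s), ZeroTail k A →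
      ZeroTail (k - k') (padShiftTuple k' A) := by
    rintro k k' A ⟨hkN, hz, hnz⟩
    refine ⟨by omega, ?_, ?_⟩
    · intro i hi
      unfold padShiftTuple
      split
      · exact hz _ (by simp only [Fin.val_mk]; omega)
      · rfl
    · intro h1 h2
      unfold padShiftTuple
      have hlt : (k - k' - 1) + k' < N := by omega
      rw [dif_pos hlt]
      have heq : (⟨(k - k' - 1) + k', hlt⟩ : Fin N) = ⟨k - 1, by omega⟩ := by
        ext; simp; omega
      rw [heq]
      exact hnz (by omega) (by omega)
  intro n
  induction n with
  | zero =>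
    intro A hA
    rw [Nat.add_zero] at hA
    obtain ⟨k, hkN, hZT⟩ := (hlevN A).mp hA
    show (∏ k' ∈ Finset.range N, lam (appendTuple (padShiftTuple k' A) 0)) = 1
    exact Finset.prod_eq_one fun k' _ => key (k - k') _ (pad k k' A hZT)
  | succ n ih =>
    intro A hA
    show (∑ j : GaloisField p s, lam (appendTuple A j) * arr lam n (shiftTuple A j)) = 1
    rw [← hsum A]
    refine Finset.sum_congr rfl fun j _ => ?_
    rcases eq_or_ne (lam (appendTuple A j)) 0 with h0 | h0
    · rw [h0]; ring
    · rw [ih (shiftTuple A j) ?_, mul_one]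
      rcases Nat.eq_zero_or_pos (lev A) with hl | hl
      · rw [(hlev A j h0).2 hl]; omega
      · have := (hlev A j h0).1 hl; omega
end
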